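/- Let T ∈ (0, ∞] and let u : cl(B₁) × [0,T) → ℝ be continuous, with ∂ₜu and the spatial second derivatives of u existing and continuous on B₁ × [0,T), and ∂ₜu(x,t) = e^{−2u(x,t)}Δu(x,t) − 1 for all x ∈ B₁, t ∈ [0,T). Let u_LN(x) = log(2/(1−‖x‖²)). If u(x,0) ≤ u_LN(x) for all x ∈ B₁, then u(x,t) ≤ u_LN(x) for all (x,t) ∈ B₁ × [0,T). -/

import Mathlib

open Real Set Filter MeasureTheory
open scoped Topology

noncomputable section

/-- The Euclidean plane. -/
abbrev E2 : Type := EuclideanSpace ℝ (Fin 2)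

/-- The Euclidean Laplacian: the sum of the two second partial derivatives. -/
noncomputable def lap (u : E2 → ℝ) (x : E2) : ℝ :=
  ∑ i : Fin 2, fderiv ℝ (fun y => fderiv ℝ u y (EuclideanSpace.single i 1)) x
    (EuclideanSpace.single i 1)

/-- The time interval `[0, T)` for `T ∈ (0, ∞]`. -/
def Itv (T : EReal) : Set ℝ := {t : ℝ | 0 ≤ t ∧ (t : EReal) < T}

/-- The Loewner-Nirenberg solution on the unit disk: the conformal factor of the
complete hyperbolic metric. -/
noncomputable def uLN (x : E2) : ℝ := Real.log (2 / (1 - ‖x‖ ^ 2))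

lemma lem_1d (h φ : ℝ → ℝ) (m d : ℝ) (hd : 0 < d)
    (hcont : ContinuousOn h (Icc (-d) d))
    (hmax : ∀ s ∈ Icc (-d) d, h s ≤ h 0)
    (hder : ∀ s ∈ Icc (-d) d, s ≠ 0 → HasDerivAt h (φ s) s)
    (hφ : HasDerivAt φ m 0) : m ≤ 0 := by
  have hright : ∀ d', 0 < d' → d' ≤ d → (∀ s ∈ Ioo (0:ℝ) d', 0 < φ s) → False := by
    intro d' h0 hdd hpos
    have hmono : StrictMonoOn h (Icc 0 d') := by
      apply strictMonoOn_of_deriv_pos (convex_Icc 0 d')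
      · exact hcont.mono (Icc_subset_Icc (by linarith) hdd)
      · intro s hs
        rw [interior_Icc] at hs
        have hsI : s ∈ Icc (-d) d := ⟨by linarith [hs.1], by linarith [hs.2]⟩
        rw [(hder s hsI (ne_of_gt hs.1)).deriv]
        exact hpos s hs
    have h1 := hmono (left_mem_Icc.2 h0.le) (right_mem_Icc.2 h0.le) h0
    have h2 := hmax d' ⟨by linarith, hdd⟩
    linarith
  have hleft : ∀ d', 0 < d' → d' ≤ d → (∀ s ∈ Ioo (-d') (0:ℝ), φ s < 0) → False := by
    intro d' h0 hdd hneg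
    have hmono : StrictAntiOn h (Icc (-d') 0) := by
      apply strictAntiOn_of_deriv_neg (convex_Icc (-d') 0)
      · exact hcont.mono (Icc_subset_Icc (by linarith) (by linarith))
      · intro s hs
        rw [interior_Icc] at hs
        have hsI : s ∈ Icc (-d) d := ⟨by linarith [hs.1], by linarith [hs.2]⟩
        rw [(hder s hsI (ne_of_lt hs.2)).deriv]
        exact hneg s hs
    have h1 := hmono (left_mem_Icc.2 (by linarith)) (right_mem_Icc.2 (by linarith))
      (show -d' < 0 by linarith)
    have h2 := hmax (-d') ⟨by linarith, by linarith⟩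
    linarith
  have hφ0 : φ 0 = 0 := by
    by_contra hne
    rcases lt_or_gt_of_ne hne with hneg | hpos
    · have hev : ∀ᶠ s in 𝓝 (0:ℝ), φ s < 0 := hφ.continuousAt.eventually (eventually_lt_nhds hneg)
      obtain ⟨ε, hε, hball⟩ := Metric.eventually_nhds_iff.1 hev
      refine hleft (min (ε/2) d) (lt_min (by linarith) hd) (min_le_right _ _) ?_
      intro s hs
      refine hball ?_
      rw [Real.dist_eq, sub_zero, abs_lt]
      constructor
      · have := hs.1; have := min_le_left (ε/2) d; linarith
      · have := hs.2; linarith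
    · have hev : ∀ᶠ s in 𝓝 (0:ℝ), 0 < φ s := hφ.continuousAt.eventually (eventually_gt_nhds hpos)
      obtain ⟨ε, hε, hball⟩ := Metric.eventually_nhds_iff.1 hev
      refine hright (min (ε/2) d) (lt_min (by linarith) hd) (min_le_right _ _) ?_
      intro s hs
      refine hball ?_
      rw [Real.dist_eq, sub_zero, abs_lt]
      constructor
      · have := hs.1; linarith
      · have := hs.2; have := min_le_left (ε/2) d; linarith
  by_contra hm
  push_neg at hm
  have hslope := hasDerivAt_iff_tendsto_slope.1 hφ
  have hev : ∀ᶠ s in 𝓝[≠] (0:ℝ), 0 < slope φ 0 s := hslope.eventually (eventually_gt_nhds hm)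
  obtain ⟨ε, hε, hball⟩ := Metric.eventually_nhds_iff.1 (eventually_nhdsWithin_iff.1 hev)
  refine hright (min (ε/2) d) (lt_min (by linarith) hd) (min_le_right _ _) ?_
  intro s hs
  have hsd : dist s 0 < ε := by
    rw [Real.dist_eq, sub_zero, abs_lt]
    constructor
    · have := hs.1; linarith
    · have := hs.2; have := min_le_left (ε/2) d; linarith
  have hsl := hball hsd (by simpa using ne_of_gt hs.1)
  rw [slope_def_field, hφ0, sub_zero, sub_zero] at hsl
  have := hs.1
  calc (0:ℝ) < (φ s / s) * s := by positivity
  _ = φ s := by field_simp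


lemma ev_diff (f : E2 → ℝ) (x v : E2) (c : ℝ) (hc : c ≠ 0)
    (hW : HasDerivAt (fun s : ℝ => fderiv ℝ f (x + s • v) v) c 0) :
    ∀ᶠ s in 𝓝[≠] (0:ℝ), DifferentiableAt ℝ f (x + s • v) := by
  set ψ : ℝ → ℝ := fun s => fderiv ℝ f (x + s • v) v with hψdef
  by_contra hcon
  have hfreq : ∃ᶠ s in 𝓝[≠] (0:ℝ), ¬ DifferentiableAt ℝ f (x + s • v) :=
    Filter.not_eventually.1 hcon
  set l : Filter ℝ := 𝓝[≠] (0:ℝ) ⊓ 𝓟 {s | ¬ DifferentiableAt ℝ f (x + s • v)} with hldef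
  haveI hne : l.NeBot := Filter.frequently_iff_neBot.1 hfreq
  have hS : ∀ᶠ s in l, ¬ DifferentiableAt ℝ f (x + s • v) := le_principal_iff.1 inf_le_right
  have hzero : ∀ᶠ s in l, ψ s = 0 := by
    filter_upwards [hS] with s hs
    simp [hψdef, fderiv_zero_of_not_differentiableAt hs]
  have hsl : Tendsto (slope ψ 0) l (𝓝 c) :=
    (hasDerivAt_iff_tendsto_slope.1 hW).mono_left inf_le_left
  by_cases hψ0 : ψ 0 = 0
  · have heq : slope ψ 0 =ᶠ[l] (fun _ => 0) := by
      filter_upwards [hzero] with s hs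
      rw [slope_def_field, hs, hψ0, sub_zero, zero_div]
    have : Tendsto (slope ψ 0) l (𝓝 0) := by
      rw [tendsto_congr' heq]; exact tendsto_const_nhds
    exact hc (tendsto_nhds_unique hsl this)
  · have habs : 0 < |ψ 0| := abs_pos.2 hψ0
    have h1 : ∀ᶠ s in l, |slope ψ 0 s| ≤ |c| + 1 := by
      filter_upwards [Metric.tendsto_nhds.1 hsl 1 one_pos] with s hs
      rw [Real.dist_eq] at hs
      have := abs_sub_abs_le_abs_sub (slope ψ 0 s) c
      linarith
    have hl0 : Tendsto (fun s : ℝ => s) l (𝓝 0) :=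
      tendsto_id.mono_left (inf_le_left.trans nhdsWithin_le_nhds)
    have h2 : ∀ᶠ s in l, |s| < |ψ 0| / (|c| + 2) := by
      have := Metric.tendsto_nhds.1 hl0 (|ψ 0| / (|c| + 2)) (by positivity)
      filter_upwards [this] with s hs
      rwa [Real.dist_eq, sub_zero] at hs
    have h3 : ∀ᶠ s in l, s ≠ 0 := by
      have : ∀ᶠ s in 𝓝[≠] (0:ℝ), s ≠ 0 := by
        filter_upwards [self_mem_nhdsWithin] with s hs; simpa using hs
      exact this.filter_mono inf_le_left
    obtain ⟨s, hs1, hsmall, hsne, hsz⟩ := (h1.and (h2.and (h3.and hzero))).exists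
    have hslope : slope ψ 0 s = (ψ s - ψ 0) / (s - 0) := slope_def_field ψ 0 s
    rw [hsz, zero_sub, sub_zero] at hslope
    have habs2 : |slope ψ 0 s| = |ψ 0| / |s| := by
      rw [hslope, abs_div, abs_neg]
    have hspos : 0 < |s| := abs_pos.2 hsne
    have : |c| + 2 < |ψ 0| / |s| := by
      rw [lt_div_iff₀ hspos]
      have := (lt_div_iff₀ (show (0:ℝ) < |c| + 2 by positivity)).1 hsmall
      linarith [mul_comm (|c| + 2) |s|]
    rw [habs2] at hs1
    linarith


lemma key_comp (F φ : ℝ → ℝ) (m d : ℝ) (hd : 0 < d)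
    (hcont : ContinuousOn F (Icc (-d) d))
    (hmax : ∀ s ∈ Icc (-d) d, F s ≤ F 0)
    (hev : ∀ᶠ s in 𝓝[≠] (0:ℝ), HasDerivAt F (φ s) s)
    (hφ : HasDerivAt φ m 0) : m ≤ 0 := by
  obtain ⟨ε, hε, hb⟩ := Metric.eventually_nhds_iff.1 (eventually_nhdsWithin_iff.1 hev)
  set d' := min (ε/2) d with hd'def
  have hd'0 : 0 < d' := lt_min (by linarith) hd
  have hd'd : d' ≤ d := min_le_right _ _
  have hsub : Icc (-d') d' ⊆ Icc (-d) d := Icc_subset_Icc (by linarith) hd'd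
  refine lem_1d F φ m d' hd'0 (hcont.mono hsub) (fun s hs => hmax s (hsub hs)) ?_ hφ
  intro s hs hs0
  refine hb ?_ (by simpa using hs0)
  rw [Real.dist_eq, sub_zero]
  have h1 := hs.1; have h2 := hs.2
  have := min_le_left (ε/2) d
  rw [abs_lt]; constructor <;> linarith


lemma normsq (y : E2) : ‖y‖^2 = (y 0)^2 + (y 1)^2 := by
  rw [EuclideanSpace.norm_eq, Real.sq_sqrt (by positivity)]
  simp [Fin.sum_univ_two, Real.norm_eq_abs, sq_abs]


lemma norm_line (x : E2) (i : Fin 2) (s : ℝ) :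
    ‖x + s • (EuclideanSpace.single i (1:ℝ) : E2)‖^2 = ‖x‖^2 + (2 * x i) * s + s^2 := by
  fin_cases i <;>
  · simp only [normsq, PiLp.add_apply, PiLp.smul_apply, EuclideanSpace.single_apply,
      smul_eq_mul, Fin.mk_zero, Fin.mk_one, Fin.isValue]
    norm_num
    ring


lemma dir_bound (f : E2 → ℝ) (x v : E2) (b ρ : ℝ) (hρ1 : ρ < 1) (hxρ : ‖x‖ < ρ)
    (hv : ‖v‖ = 1)
    (hb : ∀ s : ℝ, ‖x + s • v‖^2 = ‖x‖^2 + b * s + s^2)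
    (hcont : ContinuousOn f (Metric.closedBall 0 ρ))
    (hmax : ∀ y ∈ Metric.closedBall (0:E2) ρ, f y - uLN y ≤ f x - uLN x) :
    fderiv ℝ (fun y => fderiv ℝ f y v) x v ≤ (2*(1-‖x‖^2) + b^2)/(1-‖x‖^2)^2 := by
  set c := 1 - ‖x‖^2 with hcdef
  have hcpos : 0 < c := by have := norm_nonneg x; rw [hcdef]; nlinarith
  set ci := fderiv ℝ (fun y => fderiv ℝ f y v) x v with hcidef
  by_cases hc0 : ci = 0
  · rw [hc0]; apply div_nonneg (by nlinarith) (by positivity)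
  have hWdiff : DifferentiableAt ℝ (fun y => fderiv ℝ f y v) x := by
    by_contra hnd
    exact hc0 (by rw [hcidef, fderiv_zero_of_not_differentiableAt hnd]; simp)
  have hline : ∀ s : ℝ, HasDerivAt (fun t : ℝ => x + t • v) v s := by
    intro s
    simpa using ((hasDerivAt_id' (x := s)).smul_const v).const_add x
  have hψ : HasDerivAt (fun s : ℝ => fderiv ℝ f (x + s • v) v) ci 0 := by
    have hW : HasFDerivAt (fun y => fderiv ℝ f y v)
        (fderiv ℝ (fun y => fderiv ℝ f y v) x) ((fun s : ℝ => x + s • v) 0) := by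
      simpa using hWdiff.hasFDerivAt
    exact hW.comp_hasDerivAt 0 (hline 0)
  have hev := ev_diff f x v ci hc0 hψ
  set d := ρ - ‖x‖ with hddef
  have hd : 0 < d := by rw [hddef]; linarith
  have hDeq : ∀ s : ℝ, c - b*s - s^2 = 1 - ‖x + s • v‖^2 := by
    intro s; rw [hb, hcdef]; ring
  have hmem : ∀ s ∈ Icc (-d) d, x + s • v ∈ Metric.closedBall (0:E2) ρ := by
    intro s hs
    rw [mem_closedBall_zero_iff]
    have h1 : ‖x + s • v‖ ≤ ‖x‖ + ‖s • v‖ := norm_add_le _ _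
    have h2 : ‖s • v‖ = |s| := by rw [norm_smul, hv, mul_one, Real.norm_eq_abs]
    have h3 : |s| ≤ d := abs_le.2 ⟨hs.1, hs.2⟩
    rw [hddef] at h3
    rw [h2] at h1
    linarith
  have hDpos : ∀ s ∈ Icc (-d) d, 0 < c - b*s - s^2 := by
    intro s hs
    rw [hDeq]
    have h1 : ‖x + s • v‖ ≤ ρ := mem_closedBall_zero_iff.1 (hmem s hs)
    have hρ0 : 0 ≤ ρ := le_trans (norm_nonneg x) hxρ.le
    nlinarith [norm_nonneg (x + s • v)]
  set q : ℝ → ℝ := fun s => Real.log (2 / (c - b*s - s^2)) with hqdef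
  set Q' : ℝ → ℝ := fun s => (b + 2*s) / (c - b*s - s^2) with hQdef
  have hDder : ∀ s : ℝ, HasDerivAt (fun t : ℝ => c - b*t - t^2) (-b - 2*s) s := by
    intro s
    have h1 : HasDerivAt (fun t : ℝ => c - b*t) (-(b*1)) s :=
      ((hasDerivAt_id' (x := s)).const_mul b).const_sub c
    have h2 := hasDerivAt_pow 2 s
    exact (h1.sub h2).congr_deriv (by norm_num)
  have hDcont : Continuous (fun t : ℝ => c - b*t - t^2) :=
    (continuous_const.sub (continuous_const.mul continuous_id)).sub (continuous_pow 2)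
  have hQder : ∀ s ∈ Ioo (-d) d, HasDerivAt q (Q' s) s := by
    intro s hs
    have hDs := hDpos s (Ioo_subset_Icc_self hs)
    have hlog : HasDerivAt (fun t : ℝ => Real.log (c - b*t - t^2))
        ((c - b*s - s^2)⁻¹ * (-b - 2*s)) s :=
      by have := (Real.hasDerivAt_log (ne_of_gt hDs)).comp s (hDder s); exact this
    have hop : ∀ᶠ t in 𝓝 s, (fun t : ℝ => c - b*t - t^2) t ∈ Ioi (0:ℝ) :=
      hDcont.continuousAt.eventually_mem (Ioi_mem_nhds hDs)
    have heq : (fun t : ℝ => Real.log 2 - Real.log (c - b*t - t^2)) =ᶠ[𝓝 s] q := by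
      filter_upwards [hop] with t ht
      rw [hqdef]
      simp only []
      rw [Real.log_div (by norm_num) (ne_of_gt ht)]
    have h0 : HasDerivAt (fun t : ℝ => Real.log 2 - Real.log (c - b*t - t^2))
        (-((c - b*s - s^2)⁻¹ * (-b - 2*s))) s := hlog.const_sub (Real.log 2)
    have h1 := h0.congr_of_eventuallyEq heq.symm
    refine h1.congr_deriv ?_
    rw [hQdef]
    simp only []
    have : -((c - b*s - s^2)⁻¹ * (-b - 2*s)) = (b + 2*s) * (c - b*s - s^2)⁻¹ := by ring
    rw [this, ← div_eq_mul_inv]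
  have hQ0 : HasDerivAt Q' ((2*c + b^2)/c^2) 0 := by
    have hnum : HasDerivAt (fun t : ℝ => b + 2*t) 2 0 := by
      simpa using ((hasDerivAt_id' (x := (0:ℝ))).const_mul 2).const_add b
    have hden := hDder 0
    have hne : (fun t : ℝ => c - b*t - t^2) 0 ≠ 0 := by
      simp only []; norm_num; exact ne_of_gt hcpos
    have h := hnum.div hden hne
    refine h.congr_deriv ?_
    norm_num
    ring
  set F : ℝ → ℝ := fun s => f (x + s • v) - q s with hFdef
  have hFcont : ContinuousOn F (Icc (-d) d) := by
    apply ContinuousOn.sub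
    · exact hcont.comp ((continuous_const.add (continuous_id.smul continuous_const)).continuousOn) hmem
    · intro s hs
      have hDs := hDpos s hs
      apply ContinuousAt.continuousWithinAt
      have hinner : ContinuousAt (fun t : ℝ => 2 / (c - b*t - t^2)) s :=
        continuousAt_const.div hDcont.continuousAt (ne_of_gt hDs)
      exact hinner.log (ne_of_gt (div_pos two_pos hDs))
  have hq_uLN : ∀ s : ℝ, q s = uLN (x + s • v) := by
    intro s
    rw [hqdef]
    simp only [uLN]
    rw [hDeq]
  have hF0 : F 0 = f x - uLN x := by
    rw [hFdef]
    simp only []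
    rw [hq_uLN 0]
    simp
  have hFmax : ∀ s ∈ Icc (-d) d, F s ≤ F 0 := by
    intro s hs
    rw [hF0, hFdef]
    simp only []
    rw [hq_uLN s]
    exact hmax _ (hmem s hs)
  have hφev : ∀ᶠ s in 𝓝[≠] (0:ℝ), HasDerivAt F (fderiv ℝ f (x + s • v) v - Q' s) s := by
    have hIoo : Ioo (-d) d ∈ 𝓝 (0:ℝ) := Ioo_mem_nhds (by linarith) hd
    filter_upwards [hev, mem_nhdsWithin_of_mem_nhds hIoo] with s hdiff hsIoo
    have h1 : HasDerivAt (fun t : ℝ => f (x + t • v)) (fderiv ℝ f (x + s • v) v) s := by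
      have hF' : HasFDerivAt f (fderiv ℝ f (x + s • v)) ((fun t : ℝ => x + t • v) s) :=
        hdiff.hasFDerivAt
      exact hF'.comp_hasDerivAt s (hline s)
    exact h1.sub (hQder s hsIoo)
  have hkey := key_comp F (fun s => fderiv ℝ f (x + s • v) v - Q' s)
    (ci - (2*c + b^2)/c^2) d hd hFcont hFmax hφev (hψ.sub hQ0)
  linarith


set_option maxHeartbeats 1000000 in
theorem stmt_12 (T : EReal) (hT : 0 < T) (u : E2 → ℝ → ℝ)
    (huc : ContinuousOn (fun p : E2 × ℝ => u p.1 p.2) (Metric.closedBall (0:E2) 1 ×ˢ Itv T))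
    (hut : ContinuousOn (fun p : E2 × ℝ => deriv (u p.1) p.2) (Metric.ball (0:E2) 1 ×ˢ Itv T))
    (hu2 : ContinuousOn (fun p : E2 × ℝ =>
      fderiv ℝ (fun y => fderiv ℝ (fun z => u z p.2) y) p.1) (Metric.ball (0:E2) 1 ×ˢ Itv T))
    (hpde : ∀ x ∈ Metric.ball (0:E2) 1, ∀ t ∈ Itv T,
      deriv (u x) t = Real.exp (-2 * u x t) * lap (fun y => u y t) x - 1)
    (hinit : ∀ x ∈ Metric.ball (0:E2) 1, u x 0 ≤ uLN x) :
    ∀ x ∈ Metric.ball (0:E2) 1, ∀ t ∈ Itv T, u x t ≤ uLN x := by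
  intro x₀ hx₀ t₀ ht₀
  by_contra hlt
  push_neg at hlt
  have ht₀0 : 0 ≤ t₀ := ht₀.1
  have hx₀1 : ‖x₀‖ < 1 := mem_ball_zero_iff.1 hx₀
  have hIccItv : Icc (0:ℝ) t₀ ⊆ Itv T := by
    intro t ht
    exact ⟨ht.1, lt_of_le_of_lt (EReal.coe_le_coe_iff.2 ht.2) ht₀.2⟩
  -- maximum M of u on the closed cylinder
  have hDcomp : IsCompact (Metric.closedBall (0:E2) 1 ×ˢ Icc (0:ℝ) t₀) :=
    (isCompact_closedBall _ _).prod isCompact_Icc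
  have hDsub : (Metric.closedBall (0:E2) 1 ×ˢ Icc (0:ℝ) t₀) ⊆
      (Metric.closedBall (0:E2) 1 ×ˢ Itv T) := fun p hp => ⟨hp.1, hIccItv hp.2⟩
  have hDne : (Metric.closedBall (0:E2) 1 ×ˢ Icc (0:ℝ) t₀).Nonempty :=
    ⟨(0, 0), ⟨by simp, ⟨le_refl 0, ht₀0⟩⟩⟩
  obtain ⟨pM, hpM, hMmax⟩ := hDcomp.exists_isMaxOn hDne (huc.mono hDsub)
  set M := u pM.1 pM.2 with hMdef
  have hMb : ∀ x t, ‖x‖ ≤ 1 → t ∈ Icc (0:ℝ) t₀ → u x t ≤ M := by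
    intro x t hx ht
    exact isMaxOn_iff.1 hMmax (x, t) ⟨mem_closedBall_zero_iff.2 hx, ht⟩
  -- the radius r
  set β := min (2 * Real.exp (-(M+1))) (1 - ‖x₀‖^2) with hβdef
  have hβpos : 0 < β := lt_min (by positivity) (by nlinarith [norm_nonneg x₀])
  have hβ1 : β ≤ 1 - ‖x₀‖^2 := min_le_right _ _
  have hβ2 : β ≤ 2 * Real.exp (-(M+1)) := min_le_left _ _
  have hβle1 : β ≤ 1 := le_trans hβ1 (by nlinarith [norm_nonneg x₀])
  set r := Real.sqrt (1 - β/2) with hrdef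
  have hr2 : r^2 = 1 - β/2 := Real.sq_sqrt (by linarith)
  have hr0 : 0 ≤ r := Real.sqrt_nonneg _
  have hr1 : r < 1 := by nlinarith
  have hx₀r : ‖x₀‖ < r := by nlinarith [norm_nonneg x₀]
  have hbound : ∀ x : E2, ‖x‖ = r → M + 1 ≤ uLN x := by
    intro x hx
    have h1 : 1 - ‖x‖^2 = β/2 := by rw [hx]; linarith [hr2]
    have h2 : Real.exp (M+1) ≤ 2 / (β/2) := by
      rw [le_div_iff₀ (by linarith)]
      have h3 := Real.exp_pos (M+1)
      have hh : Real.exp (-(M+1)) * Real.exp (M+1) = 1 := by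
        rw [← Real.exp_add, show -(M+1) + (M+1) = 0 by ring, Real.exp_zero]
      nlinarith
    have h3 : Real.log (Real.exp (M+1)) ≤ Real.log (2/(β/2)) :=
      Real.log_le_log (Real.exp_pos _) h2
    rw [Real.log_exp] at h3
    unfold uLN
    rw [h1]
    exact h3
  -- the compact cylinder K and the max point of ζ
  set K := Metric.closedBall (0:E2) r ×ˢ Icc (0:ℝ) t₀ with hKdef
  have hKsub : K ⊆ Metric.closedBall (0:E2) 1 ×ˢ Itv T :=
    fun p hp => ⟨Metric.closedBall_subset_closedBall hr1.le hp.1, hIccItv hp.2⟩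
  have hKcomp : IsCompact K := (isCompact_closedBall _ _).prod isCompact_Icc
  have hx₀K : (x₀, t₀) ∈ K := ⟨mem_closedBall_zero_iff.2 hx₀r.le, ⟨ht₀0, le_refl _⟩⟩
  have hKne : K.Nonempty := ⟨(x₀, t₀), hx₀K⟩
  have huLNcont : ContinuousOn (fun p : E2 × ℝ => uLN p.1) K := by
    intro p hp
    have hp1 : ‖p.1‖ ≤ r := mem_closedBall_zero_iff.1 hp.1
    have hpos : 0 < 1 - ‖p.1‖^2 := by nlinarith [norm_nonneg p.1]
    apply ContinuousAt.continuousWithinAt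
    have hinner : ContinuousAt (fun p : E2 × ℝ => 2 / (1 - ‖p.1‖^2)) p :=
      continuousAt_const.div
        ((continuous_const.sub ((continuous_norm.comp continuous_fst).pow 2)).continuousAt)
        (ne_of_gt hpos)
    exact hinner.log (ne_of_gt (div_pos two_pos hpos))
  set ζ : E2 × ℝ → ℝ := fun p => u p.1 p.2 - uLN p.1 with hζdef
  have hζcont : ContinuousOn ζ K := (huc.mono hKsub).sub huLNcont
  obtain ⟨pS, hpSK, hSmax'⟩ := hKcomp.exists_isMaxOn hKne hζcont
  have hSmax : ∀ p ∈ K, ζ p ≤ ζ pS := fun p hp => isMaxOn_iff.1 hSmax' p hp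
  have hxSr : ‖pS.1‖ ≤ r := mem_closedBall_zero_iff.1 hpSK.1
  have htS : pS.2 ∈ Icc (0:ℝ) t₀ := hpSK.2
  have hζS : 0 < ζ pS := by
    have h1 := hSmax (x₀, t₀) hx₀K
    have h0 : 0 < ζ (x₀, t₀) := by simp only [hζdef]; linarith
    linarith
  have hxSlt : ‖pS.1‖ < r := by
    rcases lt_or_eq_of_le hxSr with h | h
    · exact h
    · exfalso
      have h1 := hMb pS.1 pS.2 (by rw [h]; exact hr1.le) htS
      have h2 := hbound pS.1 h
      have h3 : ζ pS ≤ -1 := by simp only [hζdef]; linarith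
      linarith
  have htS0 : 0 < pS.2 := by
    rcases lt_or_eq_of_le htS.1 with h | h
    · exact h
    · exfalso
      have h1 := hinit pS.1 (mem_ball_zero_iff.2 (lt_trans hxSlt hr1))
      have h3 : ζ pS ≤ 0 := by simp only [hζdef, ← h]; linarith
      linarith
  have hxSball : pS.1 ∈ Metric.ball (0:E2) 1 := mem_ball_zero_iff.2 (lt_trans hxSlt hr1)
  have htSitv : pS.2 ∈ Itv T := hIccItv htS
  -- the time derivative is nonnegative at the max point
  have htderiv : 0 ≤ deriv (u pS.1) pS.2 := by
    by_cases hdt : DifferentiableAt ℝ (u pS.1) pS.2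
    · have hsl : Tendsto (slope (u pS.1) pS.2) (𝓝[<] pS.2) (𝓝 (deriv (u pS.1) pS.2)) :=
        (hasDerivAt_iff_tendsto_slope.1 hdt.hasDerivAt).mono_left
          (nhdsWithin_mono _ (fun y hy => ne_of_lt hy))
      refine ge_of_tendsto hsl ?_
      have h1 : ∀ᶠ t in 𝓝[<] pS.2, t ∈ Ioi (0:ℝ) :=
        mem_nhdsWithin_of_mem_nhds (Ioi_mem_nhds htS0)
      filter_upwards [h1, self_mem_nhdsWithin] with t ht1 ht2
      have ht2' : t < pS.2 := ht2
      have htK : (pS.1, t) ∈ K := ⟨hpSK.1, ⟨le_of_lt ht1, le_trans ht2'.le htS.2⟩⟩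
      have hnum : u pS.1 t - u pS.1 pS.2 ≤ 0 := by
        have h5 := hSmax (pS.1, t) htK
        simp only [hζdef] at h5
        linarith
      rw [slope_def_field]
      apply div_nonneg_iff.2
      right
      exact ⟨hnum, by linarith⟩
    · rw [deriv_zero_of_not_differentiableAt hdt]
  -- PDE at the max point
  have hp := hpde pS.1 hxSball pS.2 htSitv
  have hexp : Real.exp (2 * u pS.1 pS.2) ≤ lap (fun y => u y pS.2) pS.1 := by
    have h1 : 1 ≤ Real.exp (-2 * u pS.1 pS.2) * lap (fun y => u y pS.2) pS.1 := by linarith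
    have h2 : Real.exp (-2 * u pS.1 pS.2) = (Real.exp (2 * u pS.1 pS.2))⁻¹ := by
      rw [show -2 * u pS.1 pS.2 = -(2 * u pS.1 pS.2) by ring, Real.exp_neg]
    have h3 := Real.exp_pos (2 * u pS.1 pS.2)
    rw [h2] at h1
    calc Real.exp (2 * u pS.1 pS.2) = Real.exp (2 * u pS.1 pS.2) * 1 := by ring
    _ ≤ Real.exp (2 * u pS.1 pS.2) * ((Real.exp (2 * u pS.1 pS.2))⁻¹ *
        lap (fun y => u y pS.2) pS.1) := mul_le_mul_of_nonneg_left h1 h3.le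
    _ = lap (fun y => u y pS.2) pS.1 := by field_simp
  -- spatial second derivative bound at the max point
  set c := 1 - ‖pS.1‖^2 with hcdef
  have hcpos : 0 < c := by rw [hcdef]; nlinarith [norm_nonneg pS.1]
  have hcontf : ContinuousOn (fun y : E2 => u y pS.2) (Metric.closedBall (0:E2) r) := by
    have hmap : MapsTo (fun y : E2 => (y, pS.2)) (Metric.closedBall (0:E2) r)
        (Metric.closedBall (0:E2) 1 ×ˢ Itv T) := by
      intro y hy
      exact ⟨Metric.closedBall_subset_closedBall hr1.le hy, htSitv⟩
    exact huc.comp ((continuous_id.prodMk continuous_const).continuousOn) hmap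
  have hmaxf : ∀ y ∈ Metric.closedBall (0:E2) r,
      u y pS.2 - uLN y ≤ u pS.1 pS.2 - uLN pS.1 := by
    intro y hy
    have := hSmax (y, pS.2) ⟨hy, htS⟩
    simpa only [hζdef] using this
  have hsingle : ∀ i : Fin 2, ‖(EuclideanSpace.single i (1:ℝ) : E2)‖ = 1 := by
    intro i; rw [EuclideanSpace.norm_single]; norm_num
  have hterm : ∀ i : Fin 2,
      fderiv ℝ (fun y => fderiv ℝ (fun z => u z pS.2) y (EuclideanSpace.single i 1)) pS.1
        (EuclideanSpace.single i 1) ≤ (2*c + (2 * pS.1 i)^2)/c^2 := by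
    intro i
    have h := dir_bound (fun y => u y pS.2) pS.1 (EuclideanSpace.single i 1) (2 * pS.1 i) r
      hr1 hxSlt (hsingle i) (fun s => norm_line pS.1 i s) hcontf hmaxf
    rw [← hcdef] at h
    exact h
  have hlapbound : lap (fun y => u y pS.2) pS.1 ≤ 4 / c^2 := by
    have hnormsq : (pS.1 0)^2 + (pS.1 1)^2 = 1 - c := by rw [hcdef, normsq]; ring
    have e0 := hterm 0
    have e1 := hterm 1
    have hsum : lap (fun y => u y pS.2) pS.1 =
        fderiv ℝ (fun y => fderiv ℝ (fun z => u z pS.2) y (EuclideanSpace.single 0 1)) pS.1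
          (EuclideanSpace.single 0 1) +
        fderiv ℝ (fun y => fderiv ℝ (fun z => u z pS.2) y (EuclideanSpace.single 1 1)) pS.1
          (EuclideanSpace.single 1 1) := by
      unfold lap
      rw [Fin.sum_univ_two]
    have h4 : (2*c + (2*pS.1 0)^2)/c^2 + (2*c + (2*pS.1 1)^2)/c^2 = 4/c^2 := by
      rw [← add_div, show (2*c + (2*pS.1 0)^2) + (2*c + (2*pS.1 1)^2) = 4 from by
        linear_combination 4*hnormsq]
    rw [hsum]
    linarith
  -- final contradiction
  have hcomp : Real.exp (2 * uLN pS.1) = 4 / c^2 := by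
    unfold uLN
    rw [← hcdef]
    rw [show (2:ℝ) * Real.log (2/c) = Real.log (2/c) + Real.log (2/c) by ring,
      Real.exp_add, Real.exp_log (div_pos two_pos hcpos)]
    rw [div_mul_div_comm, pow_two]
    norm_num
  have hlt2 : uLN pS.1 < u pS.1 pS.2 := by
    simp only [hζdef] at hζS
    linarith
  have hfin : Real.exp (2 * uLN pS.1) < Real.exp (2 * u pS.1 pS.2) :=
    Real.exp_lt_exp.2 (by linarith)
  rw [hcomp] at hfin
  linarith
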